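/- Let A be a bounded linear operator on a complex Hilbert space with polar decomposition A = U|A|, and t ∈ [0,1]. Then w(A) ≤ (1/2)(w(|A|^t U |A|^{1−t}) + ‖A‖). -/

import Mathlib

/-!
Write `A = X Y` with `X = U |A|^(1-t)` and `Y = |A|^t`, so that `Y` is self-adjoint, the Aluthge
transform is `Y X`, and `‖X‖ ‖Y‖ ≤ ‖A‖`. For a unit vector `x`,
`4 Re ⟪X Y x, x⟫ = 4 Re ⟪Y x, X* x⟫ ≤ ‖(Y + X*) x‖² ≤ ‖X + Y‖²`, and expanding `‖(X + Y) x‖²`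
gives `‖X + Y‖² ≤ ‖X‖² + ‖Y‖² + 2 w(Y X)`. Rotating `X` by a unimodular scalar turns the real
part into the modulus, and the rescaling `X ↦ s X`, `Y ↦ s⁻¹ Y`, which fixes both products,
brings `‖X‖² + ‖Y‖²` down to `2 ‖X‖ ‖Y‖`: `2 w(X Y) ≤ w(Y X) + ‖X‖ ‖Y‖`.
-/

noncomputable section
open ContinuousLinearMap

variable {H : Type*} [NormedAddCommGroup H] [InnerProductSpace ℂ H] [CompleteSpace H]

/-- The numerical radius of a bounded operator. -/
def nrad (A : H →L[ℂ] H) : ℝ :=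
  sSup {r : ℝ | ∃ x : H, ‖x‖ = 1 ∧ r = ‖(inner ℂ (A x) x : ℂ)‖}

/-- The absolute value |A| = (A*A)^(1/2) via continuous functional calculus. -/
def oabs (A : H →L[ℂ] H) : H →L[ℂ] H := cfc Real.sqrt (adjoint A * A)

/-- The 2×2 block operator matrix [[A,B],[C,D]] on the Hilbert space H ⊕ H. -/
def blk (A B C D : H →L[ℂ] H) : WithLp 2 (H × H) →L[ℂ] WithLp 2 (H × H) :=
  ((WithLp.prodContinuousLinearEquiv 2 ℂ H H).symm.toContinuousLinearMap).comp
    ((((A.comp (fst ℂ H H)) + B.comp (snd ℂ H H)).prod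
      ((C.comp (fst ℂ H H)) + D.comp (snd ℂ H H))).comp
      (WithLp.prodContinuousLinearEquiv 2 ℂ H H).toContinuousLinearMap)

section NumericalRadius

variable {E : Type*} [NormedAddCommGroup E] [InnerProductSpace ℂ E]

lemma nrad_nonneg (A : E →L[ℂ] E) : 0 ≤ nrad A :=
  Real.sSup_nonneg (by rintro r ⟨x, -, rfl⟩; positivity)

lemma norm_inner_le_nrad (A : E →L[ℂ] E) {x : E} (hx : ‖x‖ = 1) :
    ‖inner ℂ (A x) x‖ ≤ nrad A := by
  refine le_csSup ⟨‖A‖, ?_⟩ ⟨x, hx, rfl⟩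
  rintro r ⟨y, hy, rfl⟩
  calc ‖inner ℂ (A y) y‖ ≤ ‖A‖ * ‖y‖ * ‖y‖ :=
        (norm_inner_le_norm _ _).trans (by gcongr; exact A.le_opNorm y)
    _ = ‖A‖ := by simp [hy]

lemma norm_inner_le_nrad_mul_sq (A : E →L[ℂ] E) (v : E) :
    ‖inner ℂ (A v) v‖ ≤ nrad A * ‖v‖ ^ 2 := by
  rcases eq_or_ne v 0 with rfl | hv
  · simp
  have hv' : ‖v‖ ≠ 0 := norm_ne_zero_iff.mpr hv
  have hunit : ‖(‖v‖⁻¹ : ℂ) • v‖ = 1 := by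
    rw [norm_smul, norm_inv, Complex.norm_real, norm_norm, inv_mul_cancel₀ hv']
  have := norm_inner_le_nrad A hunit
  rw [map_smul, inner_smul_left, inner_smul_right, norm_mul, norm_mul, RCLike.norm_conj,
    norm_inv, Complex.norm_real, norm_norm] at this
  calc ‖inner ℂ (A v) v‖ = ‖v‖ ^ 2 * (‖v‖⁻¹ * (‖v‖⁻¹ * ‖inner ℂ (A v) v‖)) := by
        field_simp
    _ ≤ ‖v‖ ^ 2 * nrad A := by gcongr
    _ = nrad A * ‖v‖ ^ 2 := mul_comm _ _

lemma nrad_le {A : E →L[ℂ] E} {M : ℝ} (hM : 0 ≤ M)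
    (h : ∀ x : E, ‖x‖ = 1 → ‖inner ℂ (A x) x‖ ≤ M) : nrad A ≤ M :=
  Real.sSup_le (by rintro r ⟨x, hx, rfl⟩; exact h x hx) hM

@[simp]
lemma nrad_zero : nrad (0 : E →L[ℂ] E) = 0 :=
  le_antisymm (nrad_le le_rfl fun x _ => by simp) (nrad_nonneg 0)

lemma nrad_smul_le (c : ℂ) (A : E →L[ℂ] E) : nrad (c • A) ≤ ‖c‖ * nrad A :=
  nrad_le (by have := nrad_nonneg A; positivity) fun x hx => by
    rw [smul_apply, inner_smul_left, norm_mul, RCLike.norm_conj]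
    gcongr
    exact norm_inner_le_nrad A hx

end NumericalRadius

section SelfAdjointFactor

variable {E : Type*} [NormedAddCommGroup E] [InnerProductSpace ℂ E] [CompleteSpace E]

lemma norm_add_sq_le_of_isSelfAdjoint (X : E →L[ℂ] E) {Y : E →L[ℂ] E} (hY : IsSelfAdjoint Y) :
    ‖X + Y‖ ^ 2 ≤ ‖X‖ ^ 2 + ‖Y‖ ^ 2 + 2 * nrad (Y * X) := by
  set M := ‖X‖ ^ 2 + ‖Y‖ ^ 2 + 2 * nrad (Y * X)
  have hM : 0 ≤ M := by have := nrad_nonneg (Y * X); positivity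
  suffices h : ∀ x, ‖(X + Y) x‖ ^ 2 ≤ M * ‖x‖ ^ 2 by
    have : ‖X + Y‖ ≤ √M := opNorm_le_bound _ (Real.sqrt_nonneg M) fun x => by
      rw [← Real.sqrt_sq (norm_nonneg ((X + Y) x)), ← Real.sqrt_sq (norm_nonneg x),
        ← Real.sqrt_mul hM]
      exact Real.sqrt_le_sqrt (h x)
    calc ‖X + Y‖ ^ 2 ≤ √M ^ 2 := by gcongr
      _ = M := Real.sq_sqrt hM
  intro x
  have hcross : inner ℂ (X x) (Y x) = inner ℂ ((Y * X) x) x := by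
    change inner ℂ (X x) (Y x) = inner ℂ (Y (X x)) x
    rw [← adjoint_inner_left, hY.adjoint_eq]
  have hX : ‖X x‖ ^ 2 ≤ ‖X‖ ^ 2 * ‖x‖ ^ 2 := by rw [← mul_pow]; gcongr; exact X.le_opNorm x
  have hY' : ‖Y x‖ ^ 2 ≤ ‖Y‖ ^ 2 * ‖x‖ ^ 2 := by rw [← mul_pow]; gcongr; exact Y.le_opNorm x
  have hre : RCLike.re (inner ℂ (X x) (Y x)) ≤ nrad (Y * X) * ‖x‖ ^ 2 := by
    rw [hcross]
    exact (RCLike.re_le_norm _).trans (norm_inner_le_nrad_mul_sq _ x)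
  rw [add_apply, norm_add_sq (𝕜 := ℂ)]
  linarith

lemma four_mul_re_inner_le_norm_add_sq (X : E →L[ℂ] E) {Y : E →L[ℂ] E} (hY : IsSelfAdjoint Y)
    (x : E) : 4 * RCLike.re (inner ℂ (X (Y x)) x) ≤ ‖X + Y‖ ^ 2 * ‖x‖ ^ 2 := by
  have hsum : Y x + adjoint X x = adjoint (X + Y) x := by
    rw [map_add, hY.adjoint_eq, add_apply, add_comm]
  have hpolar := norm_add_sq (𝕜 := ℂ) (Y x) (adjoint X x)
  have hdiff := norm_sub_sq (𝕜 := ℂ) (Y x) (adjoint X x)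
  have hbound : ‖adjoint (X + Y) x‖ ≤ ‖X + Y‖ * ‖x‖ := by
    simpa only [LinearIsometryEquiv.norm_map] using (adjoint (X + Y)).le_opNorm x
  rw [← adjoint_inner_right, ← mul_pow]
  rw [hsum] at hpolar
  nlinarith [norm_nonneg (Y x - adjoint X x), norm_nonneg (adjoint (X + Y) x)]

lemma four_mul_nrad_mul_le (X : E →L[ℂ] E) {Y : E →L[ℂ] E} (hY : IsSelfAdjoint Y) :
    4 * nrad (X * Y) ≤ ‖X‖ ^ 2 + ‖Y‖ ^ 2 + 2 * nrad (Y * X) := by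
  rw [← le_div_iff₀' four_pos]
  refine nrad_le (by have := nrad_nonneg (Y * X); positivity) fun x hx => ?_
  rw [le_div_iff₀' four_pos]
  obtain ⟨c, hc, hcz⟩ := Complex.exists_norm_eq_mul_self (inner ℂ ((X * Y) x) x)
  set X' := starRingEnd ℂ c • X
  have hre : RCLike.re (inner ℂ (X' (Y x)) x) = ‖inner ℂ ((X * Y) x) x‖ := by
    rw [smul_apply, inner_smul_left, Complex.conj_conj]
    change RCLike.re (c * inner ℂ ((X * Y) x) x) = _
    rw [← hcz]
    rfl
  have hX' : ‖X'‖ = ‖X‖ := by rw [norm_smul, RCLike.norm_conj, hc, one_mul]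
  have hYX' : nrad (Y * X') ≤ nrad (Y * X) := by
    calc nrad (Y * X') = nrad (starRingEnd ℂ c • (Y * X)) := by rw [mul_smul_comm]
      _ ≤ ‖starRingEnd ℂ c‖ * nrad (Y * X) := nrad_smul_le _ _
      _ = nrad (Y * X) := by rw [RCLike.norm_conj, hc, one_mul]
  have hre_le := four_mul_re_inner_le_norm_add_sq X' hY x
  have hnorm_le := norm_add_sq_le_of_isSelfAdjoint X' hY
  rw [hre, hx, one_pow, mul_one] at hre_le
  rw [hX'] at hnorm_le
  linarith

theorem two_mul_nrad_mul_le (X : E →L[ℂ] E) {Y : E →L[ℂ] E} (hY : IsSelfAdjoint Y) :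
    2 * nrad (X * Y) ≤ nrad (Y * X) + ‖X‖ * ‖Y‖ := by
  rcases eq_or_ne X 0 with rfl | hX
  · simp
  rcases eq_or_ne Y 0 with rfl | hY0
  · simp
  have hXpos : 0 < ‖X‖ := norm_pos_iff.mpr hX
  have hYpos : 0 < ‖Y‖ := norm_pos_iff.mpr hY0
  set s : ℝ := √(‖Y‖ / ‖X‖)
  have hs : 0 < s := Real.sqrt_pos.mpr (by positivity)
  have hs2 : s ^ 2 = ‖Y‖ / ‖X‖ := Real.sq_sqrt (by positivity)
  have hsY : IsSelfAdjoint (((s⁻¹ : ℝ) : ℂ) • Y) := IsSelfAdjoint.smul (Complex.conj_ofReal _) hY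
  have key := four_mul_nrad_mul_le ((s : ℂ) • X) hsY
  have hs' : (s : ℂ) ≠ 0 := by exact_mod_cast hs.ne'
  rw [smul_mul_smul, smul_mul_smul, Complex.ofReal_inv, mul_inv_cancel₀ hs', inv_mul_cancel₀ hs',
    one_smul, one_smul, norm_smul, norm_smul, Complex.norm_real, norm_inv, Complex.norm_real,
    Real.norm_of_nonneg hs.le, mul_pow, mul_pow, inv_pow, hs2] at key
  have hbal : ‖Y‖ / ‖X‖ * ‖X‖ ^ 2 + (‖Y‖ / ‖X‖)⁻¹ * ‖Y‖ ^ 2 = 2 * (‖X‖ * ‖Y‖) := by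
    field_simp; ring
  linarith

end SelfAdjointFactor

section Rpow

variable {𝒜 : Type*} [CStarAlgebra 𝒜] [PartialOrder 𝒜] [StarOrderedRing 𝒜]

lemma cfc_rpow_mul_cfc_rpow {a : 𝒜} (ha : 0 ≤ a) {s t : ℝ} (hs : 0 ≤ s) (ht : 0 ≤ t) :
    cfc (fun x : ℝ => x ^ s) a * cfc (fun x : ℝ => x ^ t) a
      = cfc (fun x : ℝ => x ^ (s + t)) a := by
  rw [← cfc_mul (fun x : ℝ => x ^ s) (fun x : ℝ => x ^ t) a
    (Real.continuous_rpow_const hs).continuousOn (Real.continuous_rpow_const ht).continuousOn]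
  exact cfc_congr fun x hx => (Real.rpow_add_of_nonneg (spectrum_nonneg_of_nonneg ha hx) hs ht).symm

lemma norm_cfc_rpow_le {a : 𝒜} (ha : 0 ≤ a) {t : ℝ} (ht : 0 ≤ t) :
    ‖cfc (fun x : ℝ => x ^ t) a‖ ≤ ‖a‖ ^ t := by
  rcases subsingleton_or_nontrivial 𝒜 with h𝒜 | h𝒜
  · rw [Subsingleton.elim (cfc _ a) 0, norm_zero]
    positivity
  refine norm_cfc_le (by positivity) fun x hx => ?_
  have hx0 := spectrum_nonneg_of_nonneg ha hx
  rw [Real.norm_of_nonneg (by positivity)]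
  exact Real.rpow_le_rpow hx0 ((Real.le_norm_self x).trans (spectrum.norm_le_norm_of_mem hx)) ht

lemma cfc_rpow_one_sub_mul_cfc_rpow {a : 𝒜} (ha : 0 ≤ a) {t : ℝ} (ht : t ∈ Set.Icc (0 : ℝ) 1) :
    cfc (fun x : ℝ => x ^ (1 - t)) a * cfc (fun x : ℝ => x ^ t) a = a := by
  rw [cfc_rpow_mul_cfc_rpow ha (sub_nonneg.mpr ht.2) ht.1, sub_add_cancel]
  simp only [Real.rpow_one]
  exact cfc_id' ℝ a (IsSelfAdjoint.of_nonneg ha)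

lemma norm_cfc_rpow_one_sub_mul_norm_cfc_rpow_le {a : 𝒜} (ha : 0 ≤ a) {t : ℝ}
    (ht : t ∈ Set.Icc (0 : ℝ) 1) :
    ‖cfc (fun x : ℝ => x ^ (1 - t)) a‖ * ‖cfc (fun x : ℝ => x ^ t) a‖ ≤ ‖a‖ := by
  calc _ ≤ ‖a‖ ^ (1 - t) * ‖a‖ ^ t := by
        gcongr
        exacts [norm_cfc_rpow_le ha (sub_nonneg.mpr ht.2), norm_cfc_rpow_le ha ht.1]
    _ = ‖a‖ := by
        rw [← Real.rpow_add_of_nonneg (norm_nonneg a) (sub_nonneg.mpr ht.2) ht.1, sub_add_cancel,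
          Real.rpow_one]

end Rpow

lemma opNorm_le_one_of_norm_map_orthogonal_ker {𝕜 E F : Type*} [RCLike 𝕜]
    [NormedAddCommGroup E] [InnerProductSpace 𝕜 E] [CompleteSpace E]
    [NormedAddCommGroup F] [NormedSpace 𝕜 F] (U : E →L[𝕜] F)
    (hiso : ∀ x ∈ (LinearMap.ker (U : E →ₗ[𝕜] F))ᗮ, ‖U x‖ = ‖x‖) : ‖U‖ ≤ 1 := by
  refine U.opNorm_le_bound zero_le_one fun v => ?_
  have : CompleteSpace (LinearMap.ker (U : E →ₗ[𝕜] F)) := U.isClosed_ker.completeSpace_coe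
  obtain ⟨a, ha, b, hb, rfl⟩ := (LinearMap.ker (U : E →ₗ[𝕜] F)).exists_add_mem_mem_orthogonal v
  have hpyth : ‖a + b‖ * ‖a + b‖ = ‖a‖ * ‖a‖ + ‖b‖ * ‖b‖ :=
    norm_add_sq_eq_norm_sq_add_norm_sq_of_inner_eq_zero a b
      (Submodule.inner_right_of_mem_orthogonal ha hb)
  rw [map_add, show U a = 0 from ha, zero_add, hiso b hb, one_mul]
  exact (mul_self_le_mul_self_iff (norm_nonneg _) (norm_nonneg _)).mpr
    (by rw [hpyth]; exact le_add_of_nonneg_left (mul_self_nonneg _))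

lemma oabs_eq_abs (A : H →L[ℂ] H) : oabs A = CFC.abs A := by
  rw [oabs, CFC.abs, CFC.sqrt_eq_real_sqrt _ (star_mul_self_nonneg A), star_eq_adjoint, cfcₙ_eq_cfc]

theorem stmt_14_general (A U : H →L[ℂ] H)
    (hU : A = U * oabs A)
    (hiso : ∀ x ∈ (LinearMap.ker (U : H →ₗ[ℂ] H))ᗮ, ‖U x‖ = ‖x‖)
    (t : ℝ) (ht : t ∈ Set.Icc (0 : ℝ) 1) :
    nrad A ≤ (1 / 2) * (nrad (cfc (fun x : ℝ => x ^ t) (oabs A) * U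
      * cfc (fun x : ℝ => x ^ (1 - t)) (oabs A)) + ‖A‖) := by
  set X := U * cfc (fun x : ℝ => x ^ (1 - t)) (oabs A)
  have hP : 0 ≤ oabs A := oabs_eq_abs A ▸ CFC.abs_nonneg A
  have hfactor : A = X * cfc (fun x : ℝ => x ^ t) (oabs A) := by
    rwa [mul_assoc, cfc_rpow_one_sub_mul_cfc_rpow hP ht]
  have hnorm : ‖X‖ * ‖cfc (fun x : ℝ => x ^ t) (oabs A)‖ ≤ ‖A‖ :=
    calc _ ≤ ‖U‖ * (‖cfc (fun x : ℝ => x ^ (1 - t)) (oabs A)‖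
          * ‖cfc (fun x : ℝ => x ^ t) (oabs A)‖) := by
          rw [← mul_assoc]; gcongr; exact norm_mul_le _ _
      _ ≤ 1 * ‖oabs A‖ := by
          gcongr
          exacts [opNorm_le_one_of_norm_map_orthogonal_ker U hiso,
            norm_cfc_rpow_one_sub_mul_norm_cfc_rpow_le hP ht]
      _ = ‖A‖ := by rw [one_mul, oabs_eq_abs, CFC.norm_abs]
  have hmain := two_mul_nrad_mul_le X (cfc_predicate (fun x : ℝ => x ^ t) (oabs A))
  rw [← hfactor, ← mul_assoc] at hmain
  linarith

theorem stmt_14 (A U : H →L[ℂ] H)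
    (hU : A = U * oabs A)
    (hker : LinearMap.ker (U : H →ₗ[ℂ] H) = (LinearMap.range (oabs A : H →ₗ[ℂ] H))ᗮ)
    (hiso : ∀ x ∈ (LinearMap.ker (U : H →ₗ[ℂ] H))ᗮ, ‖U x‖ = ‖x‖)
    (t : ℝ) (ht : t ∈ Set.Icc (0 : ℝ) 1) :
    nrad A ≤ (1 / 2) * (nrad (cfc (fun x : ℝ => x ^ t) (oabs A) * U
      * cfc (fun x : ℝ => x ^ (1 - t)) (oabs A)) + ‖A‖) :=
  stmt_14_general A U hU hiso t ht
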